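/- arXiv:1203.3836 — 2 statements merged into one kernel-verified Lean document; each statement's English description precedes it below -/
import Mathlib

section
/- Let (Γ, α, θ, λ) be a 4-independent 1-skeleton in ℝ^n. Then every 2-valent subskeleton of (Γ, α, θ, λ) has trivial normal holonomy. -/
open SimpleGraph

universe u u' v

variable {V : Type u}

/-- The type of connections on a graph: for each oriented edge (given by an adjacency proof),
a bijection between the neighbor set of the initial vertex and that of the terminal vertex. -/
abbrev GraphConn {V : Type u} (G : SimpleGraph V) : Type u :=
  ∀ ⦃p q : V⦄, G.Adj p q → (↥(G.neighborSet p) ≃ ↥(G.neighborSet q))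

/-- The type of compatibility systems: for each oriented edge, a real-valued function on the
oriented edges at the initial vertex. -/
abbrev CompatSys {V : Type u} (G : SimpleGraph V) : Type u :=
  ∀ ⦃p q : V⦄, G.Adj p q → (↥(G.neighborSet p) → ℝ)

/-- The type of (generalized) axial functions with values in `W`. -/
abbrev AxialFn {V : Type u} (G : SimpleGraph V) (W : Type v) : Type (max u v) :=
  ∀ ⦃p q : V⦄, G.Adj p q → W

/-- The `G`-adjacency underlying an element of a neighbor set. -/
def nadj {G : SimpleGraph V} {p : V} (e : ↥(G.neighborSet p)) : G.Adj p ↑e := e.2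

/-- `θ` is a connection: `θ_e e = ē` and `θ_{ē} = θ_e⁻¹`. -/
def IsConnection (G : SimpleGraph V) (θ : GraphConn G) : Prop :=
  (∀ ⦃p q : V⦄ (h : G.Adj p q), θ h ⟨q, h⟩ = ⟨p, h.symm⟩) ∧
  (∀ ⦃p q : V⦄ (h : G.Adj p q), θ h.symm = (θ h).symm)

/-- `lam` is a compatibility system for `(G, θ)`: positive values with
`λ_{ē}(θ_e e') = 1 / λ_e(e')`. -/
def IsCompatSystem (G : SimpleGraph V) (θ : GraphConn G) (lam : CompatSys G) : Prop :=
  (∀ ⦃p q : V⦄ (h : G.Adj p q) (e : ↥(G.neighborSet p)), 0 < lam h e) ∧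
  (∀ ⦃p q : V⦄ (h : G.Adj p q) (e : ↥(G.neighborSet p)),
      lam h.symm (θ h e) = (lam h e)⁻¹)

section Axial

variable {W : Type v} [AddCommGroup W] [Module ℝ W]

/-- `α` is a generalized axial function for `(G, θ, λ)`: (gA1) `α(e) = -m_e • α(ē)` for some
`m_e > 0`, and (gA2) `α(e') - λ_e(e') • α(θ_e(e'))` is a scalar multiple of `α(e)` for `e' ≠ e`
at the initial vertex of `e`. -/
def IsGenAxial (G : SimpleGraph V) (θ : GraphConn G) (lam : CompatSys G)
    (α : AxialFn G W) : Prop :=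
  (∀ ⦃p q : V⦄ (h : G.Adj p q), ∃ m : ℝ, 0 < m ∧ α h = -(m • α h.symm)) ∧
  (∀ ⦃p q : V⦄ (h : G.Adj p q) (e : ↥(G.neighborSet p)), (↑e : V) ≠ q →
      ∃ c : ℝ, α (nadj e) - lam h e • α (nadj (θ h e)) = c • α h)

/-- The quadruple `(G, θ, λ, α)` is a generalized 1-skeleton (on a connected graph). -/
structure IsGenSkeleton (G : SimpleGraph V) (θ : GraphConn G) (lam : CompatSys G)
    (α : AxialFn G W) : Prop where
  connected : G.Connected
  conn : IsConnection G θ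
  compat : IsCompatSystem G θ lam
  axial : IsGenAxial G θ lam α

/-- The extra axioms making a generalized 1-skeleton an honest 1-skeleton:
`α(ē) = -α(e)` and pairwise linear independence at each vertex. -/
def IsSkeletal (G : SimpleGraph V) (α : AxialFn G W) : Prop :=
  (∀ ⦃p q : V⦄ (h : G.Adj p q), α h.symm = -α h) ∧
  (∀ (p : V) (e e' : ↥(G.neighborSet p)), e ≠ e' →
      LinearIndependent ℝ ![α (nadj e), α (nadj e')])

/-- `(G, θ, λ, α)` is a 1-skeleton. -/
def IsOneSkeleton (G : SimpleGraph V) (θ : GraphConn G) (lam : CompatSys G)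
    (α : AxialFn G W) : Prop :=
  IsGenSkeleton G θ lam α ∧ IsSkeletal G α

/-- `G` is `d`-valent. -/
def Valency (G : SimpleGraph V) (d : ℕ) : Prop :=
  ∀ p : V, (G.neighborSet p).ncard = d

/-- `α` is `k`-independent. -/
def kIndep (G : SimpleGraph V) (α : AxialFn G W) (k : ℕ) : Prop :=
  ∀ (p : V) (s : Finset ↥(G.neighborSet p)), s.card = k →
    LinearIndependent ℝ (fun e : ↥(↑s : Set ↥(G.neighborSet p)) => α (nadj (e : ↥(G.neighborSet p))))

/-- `α` is effective: the axial vectors at each vertex span the target space. -/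
def EffectiveAxial (G : SimpleGraph V) (α : AxialFn G W) : Prop :=
  ∀ p : V, Submodule.span ℝ (Set.range fun e : ↥(G.neighborSet p) => α (nadj e)) = ⊤

/-- A covector is generic if it pairs nonzero with each axial vector. -/
def GenericCovec (G : SimpleGraph V) (α : AxialFn G W) (ξ : W →ₗ[ℝ] ℝ) : Prop :=
  ∀ ⦃p q : V⦄ (h : G.Adj p q), ξ (α h) ≠ 0

/-- The directed-edge relation induced by a covector. -/
def dirRel (G : SimpleGraph V) (α : AxialFn G W) (ξ : W →ₗ[ℝ] ℝ) : V → V → Prop :=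
  fun p q => ∃ h : G.Adj p q, 0 < ξ (α h)

/-- A generic covector is polarizing if the induced orientation has no directed cycles. -/
def PolarizingCovec (G : SimpleGraph V) (α : AxialFn G W) (ξ : W →ₗ[ℝ] ℝ) : Prop :=
  GenericCovec G α ξ ∧ ∀ p : V, ¬ Relation.TransGen (dirRel G α ξ) p p

/-- A Morse function compatible with a (polarizing) covector. -/
def MorseCompat (G : SimpleGraph V) (α : AxialFn G W) (ξ : W →ₗ[ℝ] ℝ) (φ : V → ℝ) : Prop :=
  Function.Injective φ ∧ ∀ ⦃p q : V⦄ (h : G.Adj p q), 0 < ξ (α h) → φ p < φ q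

/-- An embedding of a 1-skeleton. -/
def IsSkelEmbedding (G : SimpleGraph V) (α : AxialFn G W) (f : V → W) : Prop :=
  ∀ ⦃p q : V⦄ (h : G.Adj p q), ∃ c : ℝ, 0 < c ∧ f q - f p = c • α h

end Axial
section Sub

variable {W : Type v} [AddCommGroup W] [Module ℝ W]

/-- Transport of oriented edges along a walk, via the connection. -/
def transport {G : SimpleGraph V} (θ : GraphConn G) :
    ∀ {p q : V}, G.Walk p q → ↥(G.neighborSet p) → ↥(G.neighborSet q)
  | _, _, SimpleGraph.Walk.nil, e => e
  | _, _, SimpleGraph.Walk.cons h w, e => transport θ w (θ h e)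

/-- The local path-connection number of an oriented edge along a walk. -/
def transNum {G : SimpleGraph V} (θ : GraphConn G) (lam : CompatSys G) :
    ∀ {p q : V}, G.Walk p q → ↥(G.neighborSet p) → ℝ
  | _, _, SimpleGraph.Walk.nil, _ => 1
  | _, _, SimpleGraph.Walk.cons h w, e => lam h e * transNum θ lam w (θ h e)

/-- A walk of `G` lies in the subgraph `H` if all its darts are edges of `H`. -/
def WalkIn {G : SimpleGraph V} (H : G.Subgraph) {p q : V} (w : G.Walk p q) : Prop :=
  ∀ d ∈ w.darts, H.Adj d.toProd.1 d.toProd.2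

/-- A subskeleton: a connected regular totally geodesic subgraph. -/
structure IsSubskeleton {G : SimpleGraph V} (θ : GraphConn G) (H : G.Subgraph) : Prop where
  connected : H.Connected
  regular : ∃ k : ℕ, ∀ p ∈ H.verts, (H.neighborSet p).ncard = k
  geodesic : ∀ ⦃p q : V⦄ (h : H.Adj p q) (e : ↥(G.neighborSet p)),
      H.Adj p ↑e → H.Adj q ↑(θ (H.adj_sub h) e)

/-- The subskeleton `H` has trivial normal holonomy. -/
def TrivialNormalHolonomy {G : SimpleGraph V} (θ : GraphConn G) (H : G.Subgraph) : Prop :=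
  ∀ (p : V) (w : G.Walk p p), WalkIn H w →
    ∀ e : ↥(G.neighborSet p), ¬ H.Adj p ↑e → transport θ w e = e

/-- The subskeleton `H` is level. -/
def LevelSub {G : SimpleGraph V} (θ : GraphConn G) (lam : CompatSys G)
    (H : G.Subgraph) : Prop :=
  ∀ (p : V) (w : G.Walk p p), WalkIn H w →
    ∀ e : ↥(G.neighborSet p), ¬ H.Adj p ↑e → transport θ w e = e →
      transNum θ lam w e = 1

/-- The index of a vertex of a subgraph with respect to a covector. -/
noncomputable def subIndex {G : SimpleGraph V} (α : AxialFn G W) (ξ : W →ₗ[ℝ] ℝ)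
    (H : G.Subgraph) (p : V) : ℕ :=
  {q : V | ∃ h : H.Adj p q, ξ (α (H.adj_sub h)) < 0}.ncard

/-- `b₀` of a subgraph with respect to a covector: the number of index-zero vertices. -/
noncomputable def subB0 {G : SimpleGraph V} (α : AxialFn G W) (ξ : W →ₗ[ℝ] ℝ)
    (H : G.Subgraph) : ℕ :=
  {p : V | p ∈ H.verts ∧ subIndex α ξ H p = 0}.ncard

/-- A 2-face: a 2-valent subskeleton with `b₀ = 1` (computed with the covector `ξ`). -/
def IsTwoFace {G : SimpleGraph V} (θ : GraphConn G) (α : AxialFn G W) (ξ : W →ₗ[ℝ] ℝ)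
    (H : G.Subgraph) : Prop :=
  IsSubskeleton θ H ∧ (∀ p ∈ H.verts, (H.neighborSet p).ncard = 2) ∧ subB0 α ξ H = 1

/-- Enough 2-faces: any two distinct oriented edges at a vertex lie on a unique 2-face. -/
def EnoughTwoFaces (G : SimpleGraph V) (θ : GraphConn G) (α : AxialFn G W)
    (ξ : W →ₗ[ℝ] ℝ) : Prop :=
  ∀ (p : V) (e e' : ↥(G.neighborSet p)), e ≠ e' →
    ∃! H : G.Subgraph, IsTwoFace θ α ξ H ∧ H.Adj p ↑e ∧ H.Adj p ↑e'

/-- A 1-skeleton is reducible if it admits a polarizing covector and has enough 2-faces. -/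
def ReducibleSkel (G : SimpleGraph V) (θ : GraphConn G) (α : AxialFn G W) : Prop :=
  ∃ ξ : W →ₗ[ℝ] ℝ, PolarizingCovec G α ξ ∧ EnoughTwoFaces G θ α ξ

/-- A total lift: an effective generalized axial function `A` for the same `(G, θ, λ)` with
values in `ℝ^d` (`d` the valency), together with a surjective linear map `L` with `α = L ∘ A`. -/
def HasTotalLift (G : SimpleGraph V) (θ : GraphConn G) (lam : CompatSys G)
    (α : AxialFn G W) (d : ℕ) : Prop :=
  ∃ A : AxialFn G (Fin d → ℝ),
    IsGenAxial G θ lam A ∧ EffectiveAxial G A ∧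
    ∃ L : (Fin d → ℝ) →ₗ[ℝ] W, Function.Surjective L ∧
      ∀ ⦃p q : V⦄ (h : G.Adj p q), α h = L (A h)

/-- Equivalence of generalized 1-skeleta on the same graph-connection pair. -/
def EquivGenSkel (G : SimpleGraph V) (θ : GraphConn G) (lam lam' : CompatSys G)
    (α α' : AxialFn G W) : Prop :=
  ∃ κ : ∀ ⦃p q : V⦄, G.Adj p q → ℝ,
    (∀ ⦃p q : V⦄ (h : G.Adj p q), 0 < κ h) ∧
    (∀ ⦃p q : V⦄ (h : G.Adj p q), α h = κ h • α' h) ∧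
    (∀ ⦃p q : V⦄ (h : G.Adj p q) (e : ↥(G.neighborSet p)),
        lam h e = (κ (nadj e) / κ (nadj (θ h e))) * lam' h e)

/-- The graph whose edges are the edges of `G` with axial vector in the subspace `Hs`. -/
def sliceGraph (G : SimpleGraph V) (α : AxialFn G W) (Hs : Submodule ℝ W) :
    SimpleGraph V where
  Adj p q := ∃ h : G.Adj p q, α h ∈ Hs ∧ α h.symm ∈ Hs
  symm := by
    constructor
    intro p q ⟨h, h1, h2⟩
    exact ⟨h.symm, h2, h1⟩
  loopless := by
    constructor
    intro p ⟨h, _⟩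
    exact G.ne_of_adj h rfl

/-- The connected component of `v` in the slice graph, as a subgraph of `G`. -/
def sliceComponent (G : SimpleGraph V) (α : AxialFn G W) (Hs : Submodule ℝ W) (v : V) :
    G.Subgraph where
  verts := {w : V | (sliceGraph G α Hs).Reachable v w}
  Adj p q := (sliceGraph G α Hs).Adj p q ∧ (sliceGraph G α Hs).Reachable v p ∧
    (sliceGraph G α Hs).Reachable v q
  adj_sub := fun h => h.1.1
  edge_vert := fun h => h.2.1
  symm := ⟨fun p q h => ⟨h.1.symm, h.2.2, h.2.1⟩⟩

/-- Pointedness of a subgraph (e.g. a slice): for every covector nonvanishing on its edges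
there is a unique source vertex. -/
def SubPointed {G : SimpleGraph V} (α : AxialFn G W) (H : G.Subgraph) : Prop :=
  ∀ ξ : W →ₗ[ℝ] ℝ, (∀ ⦃p q : V⦄ (h : H.Adj p q), ξ (α (H.adj_sub h)) ≠ 0) →
    ∃! p : V, p ∈ H.verts ∧ ∀ ⦃q : V⦄ (h : H.Adj p q), 0 < ξ (α (H.adj_sub h))

/-- Pointedness of the whole skeleton: for every generic covector there is a unique source. -/
def PointedSkel (G : SimpleGraph V) (α : AxialFn G W) : Prop :=
  ∀ ξ : W →ₗ[ℝ] ℝ, GenericCovec G α ξ →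
    ∃! p : V, ∀ ⦃q : V⦄ (h : G.Adj p q), 0 < ξ (α h)

/-- A 3-independent 1-skeleton is noncyclic if it admits a polarizing covector and every
2-slice is pointed. -/
def Noncyclic (G : SimpleGraph V) (α : AxialFn G W) : Prop :=
  kIndep G α 3 ∧ (∃ ξ : W →ₗ[ℝ] ℝ, PolarizingCovec G α ξ) ∧
  ∀ (Hs : Submodule ℝ W), Module.finrank ℝ ↥Hs = 2 → ∀ v : V,
    SubPointed α (sliceComponent G α Hs v)

/-- A `d`-valent `d`-independent 1-skeleton is toral if every slice is pointed. -/
def Toral (G : SimpleGraph V) (α : AxialFn G W) : Prop :=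
  ∀ (Hs : Submodule ℝ W) (v : V), SubPointed α (sliceComponent G α Hs v)

end Sub
section CrossSection

variable {Vc : Type u'} {W : Type v} [AddCommGroup W] [Module ℝ W]

/-- Specification of the *down* `c`-cross-section of a reducible 1-skeleton `(G, θ, λ, α)`
with polarizing covector `ξ`, compatible Morse function `φ`, and regular value `c`.
`νm` identifies the vertices of the cross-section graph `Gc` with the oriented edges of `G`
at `c`-level; `face` assigns to each oriented edge of `Gc` the corresponding 2-face of `G`
at `c`-level; `θc`, `λc`, `αc` are the down connection, down compatibility system and down
axial function, characterized by normal transport along lower paths. -/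
structure IsDownCrossSection (G : SimpleGraph V) (θ : GraphConn G) (lam : CompatSys G)
    (α : AxialFn G W) (ξ : W →ₗ[ℝ] ℝ) (φ : V → ℝ) (c : ℝ)
    (Gc : SimpleGraph Vc) (νm : Vc → V × V) (θc : GraphConn Gc) (lamc : CompatSys Gc)
    (αc : AxialFn Gc ↥(LinearMap.ker ξ))
    (face : ∀ ⦃x y : Vc⦄, Gc.Adj x y → G.Subgraph) : Prop where
  nu_inj : Function.Injective νm
  nu_level : ∀ x : Vc, ∃ _ : G.Adj (νm x).1 (νm x).2, φ (νm x).1 < c ∧ c < φ (νm x).2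
  nu_surj : ∀ ⦃p q : V⦄, G.Adj p q → φ p < c → c < φ q → ∃ x : Vc, νm x = (p, q)
  conn_c : IsConnection Gc θc
  compat_c : IsCompatSystem Gc θc lamc
  face_two : ∀ ⦃x y : Vc⦄ (h : Gc.Adj x y), IsTwoFace θ α ξ (face h)
  face_symm : ∀ ⦃x y : Vc⦄ (h : Gc.Adj x y), face h.symm = face h
  face_init : ∀ ⦃x y : Vc⦄ (h : Gc.Adj x y), (face h).Adj (νm x).1 (νm x).2
  face_inj : ∀ ⦃x y y' : Vc⦄ (h : Gc.Adj x y) (h' : Gc.Adj x y'), face h = face h' → y = y'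
  face_surj : ∀ Q : G.Subgraph, IsTwoFace θ α ξ Q →
      ∀ ⦃p q : V⦄, Q.Adj p q → φ p < c → c < φ q →
        ∃ (x y : Vc) (h : Gc.Adj x y), νm x = (p, q) ∧ face h = Q
  conn_spec : ∀ ⦃x y : Vc⦄ (h : Gc.Adj x y) (x' : ↥(Gc.neighborSet x)), (↑x' : Vc) ≠ y →
      ∀ e : ↥(G.neighborSet (νm x).1),
        (face (nadj x')).Adj (νm x).1 ↑e → (↑e : V) ≠ (νm x).2 →
      ∀ e' : ↥(G.neighborSet (νm y).1),
        (face (nadj (θc h x'))).Adj (νm y).1 ↑e' → (↑e' : V) ≠ (νm y).2 →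
      ∀ (wlk : G.Walk (νm x).1 (νm y).1), WalkIn (face h) wlk →
        (∀ z ∈ wlk.support, φ z < c) →
        transport θ wlk e = e'
  lam_spec : ∀ ⦃x y : Vc⦄ (h : Gc.Adj x y) (x' : ↥(Gc.neighborSet x)), (↑x' : Vc) ≠ y →
      ∀ e : ↥(G.neighborSet (νm x).1),
        (face (nadj x')).Adj (νm x).1 ↑e → (↑e : V) ≠ (νm x).2 →
      ∀ (wlk : G.Walk (νm x).1 (νm y).1), WalkIn (face h) wlk →
        (∀ z ∈ wlk.support, φ z < c) →
        transNum θ lam wlk e = lamc h x'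
  alpha_spec : ∀ ⦃x y : Vc⦄ (h : Gc.Adj x y) (hpq : G.Adj (νm x).1 (νm x).2)
      (e : ↥(G.neighborSet (νm x).1)),
      (face h).Adj (νm x).1 ↑e → (↑e : V) ≠ (νm x).2 →
      (↑(αc h) : W) = α (nadj e) - (ξ (α (nadj e)) / ξ (α hpq)) • α hpq

/-- Specification of the *up* `c`-cross-section; as `IsDownCrossSection`, but using normal
transport along upper paths and the up axial function. -/
structure IsUpCrossSection (G : SimpleGraph V) (θ : GraphConn G) (lam : CompatSys G)
    (α : AxialFn G W) (ξ : W →ₗ[ℝ] ℝ) (φ : V → ℝ) (c : ℝ)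
    (Gc : SimpleGraph Vc) (νm : Vc → V × V) (θc : GraphConn Gc) (lamc : CompatSys Gc)
    (αc : AxialFn Gc ↥(LinearMap.ker ξ))
    (face : ∀ ⦃x y : Vc⦄, Gc.Adj x y → G.Subgraph) : Prop where
  nu_inj : Function.Injective νm
  nu_level : ∀ x : Vc, ∃ _ : G.Adj (νm x).1 (νm x).2, φ (νm x).1 < c ∧ c < φ (νm x).2
  nu_surj : ∀ ⦃p q : V⦄, G.Adj p q → φ p < c → c < φ q → ∃ x : Vc, νm x = (p, q)
  conn_c : IsConnection Gc θc
  compat_c : IsCompatSystem Gc θc lamc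
  face_two : ∀ ⦃x y : Vc⦄ (h : Gc.Adj x y), IsTwoFace θ α ξ (face h)
  face_symm : ∀ ⦃x y : Vc⦄ (h : Gc.Adj x y), face h.symm = face h
  face_init : ∀ ⦃x y : Vc⦄ (h : Gc.Adj x y), (face h).Adj (νm x).1 (νm x).2
  face_inj : ∀ ⦃x y y' : Vc⦄ (h : Gc.Adj x y) (h' : Gc.Adj x y'), face h = face h' → y = y'
  face_surj : ∀ Q : G.Subgraph, IsTwoFace θ α ξ Q →
      ∀ ⦃p q : V⦄, Q.Adj p q → φ p < c → c < φ q →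
        ∃ (x y : Vc) (h : Gc.Adj x y), νm x = (p, q) ∧ face h = Q
  conn_spec : ∀ ⦃x y : Vc⦄ (h : Gc.Adj x y) (x' : ↥(Gc.neighborSet x)), (↑x' : Vc) ≠ y →
      ∀ e : ↥(G.neighborSet (νm x).2),
        (face (nadj x')).Adj (νm x).2 ↑e → (↑e : V) ≠ (νm x).1 →
      ∀ e' : ↥(G.neighborSet (νm y).2),
        (face (nadj (θc h x'))).Adj (νm y).2 ↑e' → (↑e' : V) ≠ (νm y).1 →
      ∀ (wlk : G.Walk (νm x).2 (νm y).2), WalkIn (face h) wlk →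
        (∀ z ∈ wlk.support, c < φ z) →
        transport θ wlk e = e'
  lam_spec : ∀ ⦃x y : Vc⦄ (h : Gc.Adj x y) (x' : ↥(Gc.neighborSet x)), (↑x' : Vc) ≠ y →
      ∀ e : ↥(G.neighborSet (νm x).2),
        (face (nadj x')).Adj (νm x).2 ↑e → (↑e : V) ≠ (νm x).1 →
      ∀ (wlk : G.Walk (νm x).2 (νm y).2), WalkIn (face h) wlk →
        (∀ z ∈ wlk.support, c < φ z) →
        transNum θ lam wlk e = lamc h x'
  alpha_spec : ∀ ⦃x y : Vc⦄ (h : Gc.Adj x y) (hpq : G.Adj (νm x).1 (νm x).2)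
      (e : ↥(G.neighborSet (νm x).2)),
      (face h).Adj (νm x).2 ↑e → (↑e : V) ≠ (νm x).1 →
      (↑(αc h) : W) = α (nadj e) - (ξ (α (nadj e)) / ξ (α hpq.symm)) • α hpq.symm

end CrossSection
section BlowUp

variable {V' : Type u'} {W : Type v} [AddCommGroup W] [Module ℝ W]

/-- A blow-up system for the subskeleton `H`: positive scalars on the normal edges with
`n(e') = λ_e(e') · n(θ_e(e'))` along edges of `H`. -/
def IsBlowUpSystem {G : SimpleGraph V} (θ : GraphConn G) (lam : CompatSys G)
    (H : G.Subgraph) (n : ∀ p : V, ↥(G.neighborSet p) → ℝ) : Prop :=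
  (∀ p ∈ H.verts, ∀ e : ↥(G.neighborSet p), ¬ H.Adj p ↑e → 0 < n p e) ∧
  (∀ ⦃p q : V⦄ (h : H.Adj p q) (e : ↥(G.neighborSet p)), ¬ H.Adj p ↑e →
      n p e = lam (H.adj_sub h) e * n q (θ (H.adj_sub h) e))

/-- No normal edge of `H` has its terminal vertex in `H`. -/
def NoChord {G : SimpleGraph V} (H : G.Subgraph) : Prop :=
  ∀ p ∈ H.verts, ∀ e : ↥(G.neighborSet p), ¬ H.Adj p ↑e → (↑e : V) ∉ H.verts

/-- Specification of the blow-up `(G', θ', λ', α')` of the generalized 1-skeleton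
`(G, θ, λ, α)` along the subskeleton `H`, with respect to the blow-up system `n`.
`β` is the blow-down map on vertices and `z p e` is the singular-locus vertex `z^p_e`
(for `p ∈ H.verts` and `e` normal to `H` at `p`). -/
structure IsBlowUp (G : SimpleGraph V) (θ : GraphConn G) (lam : CompatSys G)
    (α : AxialFn G W) (H : G.Subgraph) (n : ∀ p : V, ↥(G.neighborSet p) → ℝ)
    (G' : SimpleGraph V') (θ' : GraphConn G') (lam' : CompatSys G') (α' : AxialFn G' W)
    (β : V' → V) (z : ∀ p : V, ↥(G.neighborSet p) → V') : Prop where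
  conn' : IsConnection G' θ'
  compat' : IsCompatSystem G' θ' lam'
  beta_z : ∀ p ∈ H.verts, ∀ e : ↥(G.neighborSet p), ¬ H.Adj p ↑e → β (z p e) = p
  z_inj : ∀ ⦃p p' : V⦄, p ∈ H.verts → p' ∈ H.verts →
      ∀ ⦃e : ↥(G.neighborSet p)⦄ ⦃e' : ↥(G.neighborSet p')⦄,
        ¬ H.Adj p ↑e → ¬ H.Adj p' ↑e' → z p e = z p' e' → p = p' ∧ (↑e : V) = ↑e'
  sing_surj : ∀ x' : V', β x' ∈ H.verts →
      ∃ (p : V) (_ : p ∈ H.verts) (e : ↥(G.neighborSet p)), ¬ H.Adj p ↑e ∧ x' = z p e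
  beta_inj : ∀ ⦃x' y' : V'⦄, β x' = β y' → β x' ∉ H.verts → x' = y'
  beta_surj : ∀ x : V, x ∉ H.verts → ∃ x' : V', β x' = x
  adj_iff : ∀ x' y' : V', G'.Adj x' y' ↔
      ((β x' ∉ H.verts ∧ β y' ∉ H.verts ∧ G.Adj (β x') (β y')) ∨
       (∃ (p : V) (_ : p ∈ H.verts) (e : ↥(G.neighborSet p)) (_ : ¬ H.Adj p ↑e),
          (x' = z p e ∧ β y' = ↑e ∧ β y' ∉ H.verts) ∨
          (y' = z p e ∧ β x' = ↑e ∧ β x' ∉ H.verts)) ∨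
       (∃ (p : V) (_ : p ∈ H.verts) (e e' : ↥(G.neighborSet p))
          (_ : ¬ H.Adj p ↑e) (_ : ¬ H.Adj p ↑e'),
          (↑e : V) ≠ ↑e' ∧ x' = z p e ∧ y' = z p e') ∨
       (∃ (p q : V) (hpq : H.Adj p q) (e : ↥(G.neighborSet p)) (_ : ¬ H.Adj p ↑e),
          x' = z p e ∧ y' = z q (θ (H.adj_sub hpq) e)))
  proj_adj : ∀ ⦃x' w' : V'⦄, G'.Adj x' w' → β x' ∉ H.verts → G.Adj (β x') (β w')
  -- axial function
  alpha_ns : ∀ ⦃x' y' : V'⦄ (h' : G'.Adj x' y'), β x' ∉ H.verts →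
      ∀ (h : G.Adj (β x') (β y')), α' h' = α h
  alpha_t : ∀ ⦃p : V⦄, p ∈ H.verts → ∀ (e : ↥(G.neighborSet p)), ¬ H.Adj p ↑e →
      ∀ ⦃y' : V'⦄ (h' : G'.Adj (z p e) y'), β y' = ↑e →
        α' h' = (n p e)⁻¹ • α (nadj e)
  alpha_h : ∀ ⦃p q : V⦄ (hpq : H.Adj p q) (e : ↥(G.neighborSet p)), ¬ H.Adj p ↑e →
      ∀ (h' : G'.Adj (z p e) (z q (θ (H.adj_sub hpq) e))), α' h' = α (H.adj_sub hpq)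
  alpha_v : ∀ ⦃p : V⦄, p ∈ H.verts →
      ∀ (e e' : ↥(G.neighborSet p)), ¬ H.Adj p ↑e → ¬ H.Adj p ↑e' → (↑e : V) ≠ ↑e' →
      ∀ (h' : G'.Adj (z p e) (z p e')),
        α' h' = α (nadj e') - (n p e' / n p e) • α (nadj e)
  -- connection, on edges not issuing from the singular locus
  conn_ns : ∀ ⦃x' y' : V'⦄ (h' : G'.Adj x' y'), β x' ∉ H.verts → β y' ∉ H.verts →
      ∀ (h : G.Adj (β x') (β y')) (w' : ↥(G'.neighborSet x')) (w : ↥(G.neighborSet (β x'))),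
        (↑w : V) = β ↑w' → β ↑(θ' h' w') = ↑(θ h w)
  -- connection along `z^p_e → t(e)`
  conn_t_v : ∀ ⦃p : V⦄, p ∈ H.verts → ∀ (e : ↥(G.neighborSet p)), ¬ H.Adj p ↑e →
      ∀ ⦃y' : V'⦄ (h' : G'.Adj (z p e) y'), β y' = ↑e →
      ∀ (e'' : ↥(G.neighborSet p)), ¬ H.Adj p ↑e'' → (↑e'' : V) ≠ ↑e →
      ∀ (w' : ↥(G'.neighborSet (z p e))), (↑w' : V') = z p e'' →
        β ↑(θ' h' w') = ↑(θ (nadj e) e'')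
  conn_t_h : ∀ ⦃p : V⦄, p ∈ H.verts → ∀ (e : ↥(G.neighborSet p)), ¬ H.Adj p ↑e →
      ∀ ⦃y' : V'⦄ (h' : G'.Adj (z p e) y'), β y' = ↑e →
      ∀ ⦃r : V⦄ (hpr : H.Adj p r)
        (w' : ↥(G'.neighborSet (z p e))), (↑w' : V') = z r (θ (H.adj_sub hpr) e) →
      ∀ (rr : ↥(G.neighborSet p)), (↑rr : V) = r →
        β ↑(θ' h' w') = ↑(θ (nadj e) rr)
  -- connection along a horizontal edge `z^p_e → z^q_f`
  conn_h_t : ∀ ⦃p q : V⦄ (hpq : H.Adj p q) (e : ↥(G.neighborSet p)), ¬ H.Adj p ↑e →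
      ∀ (h' : G'.Adj (z p e) (z q (θ (H.adj_sub hpq) e)))
        (w' : ↥(G'.neighborSet (z p e))), β ↑w' = ↑e →
        β ↑(θ' h' w') = ↑(θ (H.adj_sub hpq) e)
  conn_h_v : ∀ ⦃p q : V⦄ (hpq : H.Adj p q) (e : ↥(G.neighborSet p)), ¬ H.Adj p ↑e →
      ∀ (h' : G'.Adj (z p e) (z q (θ (H.adj_sub hpq) e)))
        (e'' : ↥(G.neighborSet p)), ¬ H.Adj p ↑e'' → (↑e'' : V) ≠ ↑e →
      ∀ (w' : ↥(G'.neighborSet (z p e))), (↑w' : V') = z p e'' →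
        (↑(θ' h' w') : V') = z q (θ (H.adj_sub hpq) e'')
  conn_h_h : ∀ ⦃p q : V⦄ (hpq : H.Adj p q) (e : ↥(G.neighborSet p)), ¬ H.Adj p ↑e →
      ∀ (h' : G'.Adj (z p e) (z q (θ (H.adj_sub hpq) e)))
        ⦃r : V⦄ (hpr : H.Adj p r)
        (w' : ↥(G'.neighborSet (z p e))), (↑w' : V') = z r (θ (H.adj_sub hpr) e) →
      ∀ (rr : ↥(G.neighborSet p)), (↑rr : V) = r →
      ∀ (s : V), s = ↑(θ (H.adj_sub hpq) rr) →
      ∀ (hqs : H.Adj q s),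
        (↑(θ' h' w') : V') = z s (θ (H.adj_sub hqs) (θ (H.adj_sub hpq) e))
  -- connection along a vertical edge `z^p_e → z^p_{e'}`
  conn_v_t : ∀ ⦃p : V⦄, p ∈ H.verts →
      ∀ (e e' : ↥(G.neighborSet p)), ¬ H.Adj p ↑e → ¬ H.Adj p ↑e' → (↑e : V) ≠ ↑e' →
      ∀ (h' : G'.Adj (z p e) (z p e')) (w' : ↥(G'.neighborSet (z p e))), β ↑w' = ↑e →
        β ↑(θ' h' w') = ↑e'
  conn_v_h : ∀ ⦃p : V⦄, p ∈ H.verts →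
      ∀ (e e' : ↥(G.neighborSet p)), ¬ H.Adj p ↑e → ¬ H.Adj p ↑e' → (↑e : V) ≠ ↑e' →
      ∀ (h' : G'.Adj (z p e) (z p e')) ⦃r : V⦄ (hpr : H.Adj p r)
        (w' : ↥(G'.neighborSet (z p e))), (↑w' : V') = z r (θ (H.adj_sub hpr) e) →
        (↑(θ' h' w') : V') = z r (θ (H.adj_sub hpr) e')
  conn_v_v : ∀ ⦃p : V⦄, p ∈ H.verts →
      ∀ (e e' e'' : ↥(G.neighborSet p)), ¬ H.Adj p ↑e → ¬ H.Adj p ↑e' → ¬ H.Adj p ↑e'' →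
        (↑e : V) ≠ ↑e' → (↑e'' : V) ≠ ↑e → (↑e'' : V) ≠ ↑e' →
      ∀ (h' : G'.Adj (z p e) (z p e')) (w' : ↥(G'.neighborSet (z p e))),
        (↑w' : V') = z p e'' → (↑(θ' h' w') : V') = z p e''
  -- compatibility system
  lam_ns : ∀ ⦃x' y' : V'⦄ (h' : G'.Adj x' y'), β x' ∉ H.verts →
      ∀ (h : G.Adj (β x') (β y')) (w' : ↥(G'.neighborSet x')) (w : ↥(G.neighborSet (β x'))),
        (↑w : V) = β ↑w' → lam' h' w' = lam h w
  lam_t_v : ∀ ⦃p : V⦄, p ∈ H.verts → ∀ (e : ↥(G.neighborSet p)), ¬ H.Adj p ↑e →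
      ∀ ⦃y' : V'⦄ (h' : G'.Adj (z p e) y'), β y' = ↑e →
      ∀ (e'' : ↥(G.neighborSet p)), ¬ H.Adj p ↑e'' → (↑e'' : V) ≠ ↑e →
      ∀ (w' : ↥(G'.neighborSet (z p e))), (↑w' : V') = z p e'' →
        lam' h' w' = lam (nadj e) e''
  lam_t_h : ∀ ⦃p : V⦄, p ∈ H.verts → ∀ (e : ↥(G.neighborSet p)), ¬ H.Adj p ↑e →
      ∀ ⦃y' : V'⦄ (h' : G'.Adj (z p e) y'), β y' = ↑e →
      ∀ ⦃r : V⦄ (hpr : H.Adj p r)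
        (w' : ↥(G'.neighborSet (z p e))), (↑w' : V') = z r (θ (H.adj_sub hpr) e) →
      ∀ (rr : ↥(G.neighborSet p)), (↑rr : V) = r →
        lam' h' w' = lam (nadj e) rr
  lam_h_t : ∀ ⦃p q : V⦄ (hpq : H.Adj p q) (e : ↥(G.neighborSet p)), ¬ H.Adj p ↑e →
      ∀ (h' : G'.Adj (z p e) (z q (θ (H.adj_sub hpq) e)))
        (w' : ↥(G'.neighborSet (z p e))), β ↑w' = ↑e → lam' h' w' = 1
  lam_h_v : ∀ ⦃p q : V⦄ (hpq : H.Adj p q) (e : ↥(G.neighborSet p)), ¬ H.Adj p ↑e →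
      ∀ (h' : G'.Adj (z p e) (z q (θ (H.adj_sub hpq) e)))
        (e'' : ↥(G.neighborSet p)), ¬ H.Adj p ↑e'' → (↑e'' : V) ≠ ↑e →
      ∀ (w' : ↥(G'.neighborSet (z p e))), (↑w' : V') = z p e'' →
        lam' h' w' = lam (H.adj_sub hpq) e''
  lam_h_h : ∀ ⦃p q : V⦄ (hpq : H.Adj p q) (e : ↥(G.neighborSet p)), ¬ H.Adj p ↑e →
      ∀ (h' : G'.Adj (z p e) (z q (θ (H.adj_sub hpq) e)))
        ⦃r : V⦄ (hpr : H.Adj p r)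
        (w' : ↥(G'.neighborSet (z p e))), (↑w' : V') = z r (θ (H.adj_sub hpr) e) →
      ∀ (rr : ↥(G.neighborSet p)), (↑rr : V) = r →
        lam' h' w' = lam (H.adj_sub hpq) rr
  lam_v : ∀ ⦃p : V⦄, p ∈ H.verts →
      ∀ (e e' : ↥(G.neighborSet p)), ¬ H.Adj p ↑e → ¬ H.Adj p ↑e' → (↑e : V) ≠ ↑e' →
      ∀ (h' : G'.Adj (z p e) (z p e')) (w' : ↥(G'.neighborSet (z p e))),
        lam' h' w' = 1

end BlowUp
section Misc

variable {W : Type v} [AddCommGroup W] [Module ℝ W]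

/-- The induced subgraph of `G` on a set of vertices. -/
def inducedSub (G : SimpleGraph V) (s : Set V) : G.Subgraph where
  verts := s
  Adj p q := G.Adj p q ∧ p ∈ s ∧ q ∈ s
  adj_sub := fun h => h.1
  edge_vert := fun h => h.2.1
  symm := ⟨fun _ _ h => ⟨h.1.symm, h.2.2, h.2.1⟩⟩

/-- The graph of the direct product of a graph with the interval. -/
def prodIntervalGraph (G : SimpleGraph V) : SimpleGraph (V × Bool) where
  Adj x y := (x.2 = y.2 ∧ G.Adj x.1 y.1) ∨ (x.1 = y.1 ∧ x.2 ≠ y.2)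
  symm := by
    constructor
    rintro x y (⟨h1, h2⟩ | ⟨h1, h2⟩)
    · exact Or.inl ⟨h1.symm, h2.symm⟩
    · exact Or.inr ⟨h1.symm, Ne.symm h2⟩
  loopless := by
    constructor
    rintro x (⟨_, h⟩ | ⟨_, h⟩)
    · exact G.ne_of_adj h rfl
    · exact h rfl

/-- Specification of the direct product of the generalized 1-skeleton `(G, θ, λ, α)` in `W`
with the interval 1-skeleton `(I, α_I, θ_I, λ_I)` in `ℝ`: the result is the quadruple
`(prodIntervalGraph G, θ', λ', α')` in `W × ℝ`. -/
structure IsIntervalProduct (G : SimpleGraph V) (θ : GraphConn G) (lam : CompatSys G)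
    (α : AxialFn G W) (θ' : GraphConn (prodIntervalGraph G))
    (lam' : CompatSys (prodIntervalGraph G))
    (α' : AxialFn (prodIntervalGraph G) (W × ℝ)) : Prop where
  conn' : IsConnection (prodIntervalGraph G) θ'
  compat' : IsCompatSystem (prodIntervalGraph G) θ' lam'
  alpha_hor : ∀ ⦃x y : V × Bool⦄ (h' : (prodIntervalGraph G).Adj x y) (h : G.Adj x.1 y.1),
      x.2 = y.2 → α' h' = (α h, 0)
  alpha_up : ∀ ⦃x y : V × Bool⦄ (h' : (prodIntervalGraph G).Adj x y),
      x.1 = y.1 → x.2 = false → α' h' = (0, 1)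
  alpha_down : ∀ ⦃x y : V × Bool⦄ (h' : (prodIntervalGraph G).Adj x y),
      x.1 = y.1 → x.2 = true → α' h' = (0, -1)
  conn_hor_hor : ∀ ⦃x y : V × Bool⦄ (h' : (prodIntervalGraph G).Adj x y) (h : G.Adj x.1 y.1),
      x.2 = y.2 → ∀ (w' : ↥((prodIntervalGraph G).neighborSet x)) (w : ↥(G.neighborSet x.1)),
        (↑w' : V × Bool) = (↑w, x.2) → (↑(θ' h' w') : V × Bool) = (↑(θ h w), x.2)
  conn_hor_ver : ∀ ⦃x y : V × Bool⦄ (h' : (prodIntervalGraph G).Adj x y),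
      x.2 = y.2 → ∀ (w' : ↥((prodIntervalGraph G).neighborSet x)),
        (↑w' : V × Bool) = (x.1, !x.2) → (↑(θ' h' w') : V × Bool) = (y.1, !x.2)
  conn_ver_hor : ∀ ⦃x y : V × Bool⦄ (h' : (prodIntervalGraph G).Adj x y),
      x.1 = y.1 → ∀ (w' : ↥((prodIntervalGraph G).neighborSet x)) (w : ↥(G.neighborSet x.1)),
        (↑w' : V × Bool) = (↑w, x.2) → (↑(θ' h' w') : V × Bool) = (↑w, y.2)
  lam_hor_hor : ∀ ⦃x y : V × Bool⦄ (h' : (prodIntervalGraph G).Adj x y) (h : G.Adj x.1 y.1),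
      x.2 = y.2 → ∀ (w' : ↥((prodIntervalGraph G).neighborSet x)) (w : ↥(G.neighborSet x.1)),
        (↑w' : V × Bool) = (↑w, x.2) → lam' h' w' = lam h w
  lam_hor_ver : ∀ ⦃x y : V × Bool⦄ (h' : (prodIntervalGraph G).Adj x y),
      x.2 = y.2 → ∀ (w' : ↥((prodIntervalGraph G).neighborSet x)),
        (↑w' : V × Bool) = (x.1, !x.2) → lam' h' w' = 1
  lam_ver : ∀ ⦃x y : V × Bool⦄ (h' : (prodIntervalGraph G).Adj x y),
      x.1 = y.1 → ∀ (w' : ↥((prodIntervalGraph G).neighborSet x)), lam' h' w' = 1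

end Misc

section Polytope

/-- `(G, A)` is the vertex–edge graph of a simple `d`-polytope `S ⊆ ℝ^d`, with
`A(uv) = v - u` along each oriented edge: `g` identifies the vertices of `G` with the
extreme points of `S = convexHull F`, `S` is full-dimensional, adjacency corresponds to
exposed one-dimensional faces (segments), and `A` is given by differences of vertices. -/
def IsPolytopeSkeleton {d : ℕ} (G : SimpleGraph V) (A : AxialFn G (Fin d → ℝ)) : Prop :=
  ∃ (F : Finset (Fin d → ℝ)) (g : V → (Fin d → ℝ)),
    affineSpan ℝ (convexHull ℝ (F : Set (Fin d → ℝ))) = ⊤ ∧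
    Function.Injective g ∧
    Set.range g = Set.extremePoints ℝ (convexHull ℝ (F : Set (Fin d → ℝ))) ∧
    (∀ p q : V, G.Adj p q ↔ (g p ≠ g q ∧
        IsExposed ℝ (convexHull ℝ (F : Set (Fin d → ℝ))) (segment ℝ (g p) (g q)))) ∧
    (∀ ⦃p q : V⦄ (h : G.Adj p q), A h = g q - g p)

end Polytope

/-!
Transporting an edge `e` normal to a totally geodesic subgraph `H` along a loop in `H` keeps its
axial vector in the span of `α(e)` and the axial vectors of the `H`-edges at the base point: by
(gA1) and (gA2), crossing an edge `h` only changes `α` by a nonzero factor and a multiple of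
`α(h)`, and `θ` maps `H`-edges to `H`-edges. If `H` is 2-valent this span is spanned by three
edge vectors, so by 4-independence the transported edge, being normal and hence distinct from
both `H`-edges, must be `e` itself.
-/

section Holonomy

variable {W : Type v} [AddCommGroup W] [Module ℝ W]
  {G : SimpleGraph V} {θ : GraphConn G} {lam : CompatSys G} {α : AxialFn G W}

lemma IsGenAxial.mem_of_connection (hθ : IsConnection G θ) (hlam : IsCompatSystem G θ lam)
    (hα : IsGenAxial G θ lam α) {S : Submodule ℝ W} {p r : V} (h : G.Adj p r)
    (e : ↥(G.neighborSet p)) (hh : α h ∈ S) (he : α (nadj e) ∈ S) :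
    α (nadj (θ h e)) ∈ S := by
  by_cases her : (e : V) = r
  · obtain rfl : e = ⟨r, h⟩ := Subtype.ext her
    obtain ⟨m, hm, hαm⟩ := hα.1 h
    have hrev : α h.symm = -m⁻¹ • α h := by
      rw [hαm, smul_neg, neg_smul, neg_neg, smul_smul, inv_mul_cancel₀ hm.ne', one_smul]
    rw [hθ.1 h]
    exact hrev ▸ S.smul_mem _ hh
  · obtain ⟨c, hc⟩ := hα.2 h e her
    have hθe : α (nadj (θ h e)) = (lam h e)⁻¹ • (α (nadj e) - c • α h) := by
      rw [← hc, sub_sub_cancel, smul_smul, inv_mul_cancel₀ (hlam.1 h e).ne', one_smul]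
    rw [hθe]
    exact S.smul_mem _ (S.sub_mem he (S.smul_mem _ hh))

lemma IsSubskeleton.not_adj_connection (hθ : IsConnection G θ) {H : G.Subgraph}
    (hH : IsSubskeleton θ H) {p r : V} (h : H.Adj p r) {e : ↥(G.neighborSet p)}
    (he : ¬ H.Adj p e) : ¬ H.Adj r (θ (H.adj_sub h) e) := by
  intro hr
  have := hH.geodesic h.symm _ hr
  rw [hθ.2 (H.adj_sub h), Equiv.symm_apply_apply] at this
  exact he this

lemma IsSubskeleton.adj_connection_symm (hθ : IsConnection G θ) {H : G.Subgraph}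
    (hH : IsSubskeleton θ H) {p r : V} (h : H.Adj p r) {f : ↥(G.neighborSet r)}
    (hf : H.Adj r f) : H.Adj p ((θ (H.adj_sub h)).symm f) := by
  have := hH.geodesic h.symm _ hf
  rwa [hθ.2 (H.adj_sub h)] at this

lemma WalkIn.adj_of_cons {H : G.Subgraph} {p r q : V} {h : G.Adj p r} {w : G.Walk r q}
    (hw : WalkIn H (.cons h w)) : H.Adj p r :=
  hw _ List.mem_cons_self

lemma WalkIn.of_cons {H : G.Subgraph} {p r q : V} {h : G.Adj p r} {w : G.Walk r q}
    (hw : WalkIn H (.cons h w)) : WalkIn H w :=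
  fun _ hd => hw _ (List.mem_cons_of_mem _ hd)

lemma transport_not_adj (hθ : IsConnection G θ) {H : G.Subgraph} (hH : IsSubskeleton θ H)
    {p q : V} (w : G.Walk p q) (hw : WalkIn H w) {e : ↥(G.neighborSet p)}
    (he : ¬ H.Adj p e) : ¬ H.Adj q (transport θ w e) := by
  induction w with
  | nil => exact he
  | cons h w ih => exact ih hw.of_cons (hH.not_adj_connection hθ hw.adj_of_cons he)

lemma transport_mem (hθ : IsConnection G θ) (hlam : IsCompatSystem G θ lam)
    (hα : IsGenAxial G θ lam α) {H : G.Subgraph} (hH : IsSubskeleton θ H)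
    {S : Submodule ℝ W} {p q : V} (w : G.Walk p q) (hw : WalkIn H w)
    (hS : ∀ f : ↥(G.neighborSet p), H.Adj p f → α (nadj f) ∈ S)
    {e : ↥(G.neighborSet p)} (he : α (nadj e) ∈ S) :
    α (nadj (transport θ w e)) ∈ S := by
  induction w with
  | nil => exact he
  | @cons p r q h w ih =>
    have hpr : H.Adj p r := hw.adj_of_cons
    have hh : α h ∈ S := hS ⟨r, h⟩ hpr
    refine ih hw.of_cons (fun f hf => ?_) (hα.mem_of_connection hθ hlam h e hh he)
    rw [← (θ h).apply_symm_apply f]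
    exact hα.mem_of_connection hθ hlam h _ hh (hS _ (hH.adj_connection_symm hθ hpr hf))

open Classical in
lemma kIndep.notMem_span_erase {k : ℕ} (hk : kIndep G α k) {p : V}
    {s : Finset ↥(G.neighborSet p)} (hs : s.card = k) {a : ↥(G.neighborSet p)} (ha : a ∈ s) :
    α (nadj a) ∉
      Submodule.span ℝ ((fun e => α (nadj e)) '' (s.erase a : Set ↥(G.neighborSet p))) := by
  have hnot := (hk p s hs).notMem_span_image
    (s := {j : ↥(↑s : Set ↥(G.neighborSet p)) | (j : ↥(G.neighborSet p)) ≠ a})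
    (x := ⟨a, ha⟩) (by simp)
  convert hnot using 3
  ext x
  constructor
  · rintro ⟨b, hb, rfl⟩
    rw [Finset.mem_coe, Finset.mem_erase] at hb
    exact ⟨⟨b, hb.2⟩, hb.1, rfl⟩
  · rintro ⟨⟨b, hb⟩, hba, rfl⟩
    exact ⟨b, Finset.mem_erase.mpr ⟨hba, hb⟩, rfl⟩

lemma SimpleGraph.Subgraph.exists_adj_iff_of_ncard_eq_two {H : G.Subgraph} {p : V}
    (hp : (H.neighborSet p).ncard = 2) :
    ∃ f₁ f₂ : ↥(G.neighborSet p), f₁ ≠ f₂ ∧ ∀ f : ↥(G.neighborSet p),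
      H.Adj p f ↔ f = f₁ ∨ f = f₂ := by
  obtain ⟨q₁, q₂, hq, hset⟩ := Set.ncard_eq_two.mp hp
  have hq₁ : H.Adj p q₁ := show q₁ ∈ H.neighborSet p by simp [hset]
  have hq₂ : H.Adj p q₂ := show q₂ ∈ H.neighborSet p by simp [hset]
  refine ⟨⟨q₁, H.adj_sub hq₁⟩, ⟨q₂, H.adj_sub hq₂⟩,
    fun h => hq (congrArg Subtype.val h), ?_⟩
  intro f
  rw [← Subgraph.mem_neighborSet, hset]
  simp [Subtype.ext_iff]

end Holonomy

theorem every_two_valent_subskeleton_of_four_independent_has_trivial_normal_holonomy_general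
    {V : Type u} {n : ℕ}
    (G : SimpleGraph V) (θ : GraphConn G) (lam : CompatSys G)
    (α : AxialFn G (Fin n → ℝ))
    (hsk : IsOneSkeleton G θ lam α) (h4 : kIndep G α 4) :
    ∀ H : G.Subgraph, IsSubskeleton θ H →
      (∀ p ∈ H.verts, (H.neighborSet p).ncard = 2) →
      TrivialNormalHolonomy θ H := by
  classical
  intro H hH hval p w hw e he
  rcases w with _ | ⟨hpr, w⟩
  · rfl
  obtain ⟨f₁, f₂, hf₁₂, hHp⟩ :=
    H.exists_adj_iff_of_ncard_eq_two (hval p (H.edge_vert hw.adj_of_cons))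
  set e' := transport θ (.cons hpr w) e
  have hconn := hsk.1.conn
  have he' : ¬ H.Adj p e' := transport_not_adj hconn hH _ hw he
  have hmem :
      α (nadj e') ∈ Submodule.span ℝ {α (nadj e), α (nadj f₁), α (nadj f₂)} := by
    refine transport_mem hconn hsk.1.compat hsk.1.axial hH _ hw (fun f hf => ?_)
      (Submodule.subset_span (by simp))
    rcases (hHp f).mp hf with rfl | rfl <;> exact Submodule.subset_span (by simp)
  by_contra hne
  have hef : e ≠ f₁ ∧ e ≠ f₂ := by rw [← not_or, ← hHp]; exact he
  have he'f : e' ≠ f₁ ∧ e' ≠ f₂ := by rw [← not_or, ← hHp]; exact he'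
  have hcard : ({e', e, f₁, f₂} : Finset _).card = 4 := by
    rw [Finset.card_insert_of_notMem (by simp [hne, he'f]),
      Finset.card_insert_of_notMem (by simp [hef]), Finset.card_pair hf₁₂]
  refine kIndep.notMem_span_erase h4 hcard (Finset.mem_insert_self _ _) ?_
  rwa [Finset.erase_insert (by simp [hne, he'f]), Finset.coe_insert, Finset.coe_pair,
    Set.image_insert_eq, Set.image_pair]

/-- In a 4-independent 1-skeleton, every 2-valent subskeleton has trivial
normal holonomy. -/
theorem every_two_valent_subskeleton_of_four_independent_has_trivial_normal_holonomy
    {V : Type u} [Fintype V] {n : ℕ}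
    (G : SimpleGraph V) (θ : GraphConn G) (lam : CompatSys G)
    (α : AxialFn G (Fin n → ℝ))
    (hsk : IsOneSkeleton G θ lam α) (h4 : kIndep G α 4) :
    ∀ H : G.Subgraph, IsSubskeleton θ H →
      (∀ p ∈ H.verts, (H.neighborSet p).ncard = 2) →
      TrivialNormalHolonomy θ H :=
  every_two_valent_subskeleton_of_four_independent_has_trivial_normal_holonomy_general G θ lam α hsk
    h4
end

section
/- Let (Γ, α, θ, λ) be a d-valent reducible 1-skeleton in ℝ^n and let (Γ, A, θ, λ) be a lift of it: A is an effective generalized axial function for (Γ, θ, λ) with values in ℝ^N (n < N ≤ d) and there is a surjective linear map P : ℝ^N → ℝ^n with α = P ∘ A. Then (Γ, A, θ, λ) is reducible: for every polarizing covector ξ of (Γ, α, θ, λ), the covector Ξ = ξ ∘ P is generic and polarizing for (Γ, A, θ, λ), the 2-faces of (Γ, A, θ, λ) coincide with the 2-faces of (Γ, α, θ, λ), and hence (Γ, A, θ, λ) has enough 2-faces. -/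
open SimpleGraph

universe u u' v

variable {V : Type u}

/-!
Since `α = L ∘ A`, the covector `ξ ∘ L` pairs with `A` exactly as `ξ` pairs with `α`, so
genericity, polarization, indices and `b₀` transfer verbatim and the 2-faces of the lift are those
of the base computed with `ξ`. What remains is that being a 2-face does not depend on the generic
covector. A connected 2-valent subskeleton is a cycle `x₀, …, x_{m-1}`, and for
`aᵢ = α(xᵢ xᵢ₊₁)` axiom (gA2) with `α(ē) = -α(e)` gives `aᵢ₊₂ = c₁ aᵢ + c₂ aᵢ₊₁` with `c₁ < 0`:
the `aᵢ` lie in a plane and keep turning the same way, each time by an angle in `(0, π)`. The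
vertex `xᵢ₊₁` has index `0` exactly when `ρ(aᵢ) < 0 < ρ(aᵢ₊₁)`, so `b₀` counts how often the
turning vectors cross the line `ker ρ` in one direction. That is their winding number
`∑ arg(aᵢ₊₁ / aᵢ) / 2π`, which does not involve `ρ`.
-/

open Finset Real

namespace Complex

theorem arg_div_eq_arg_sub_arg_add {z z' : ℂ} (hz : z.im ≠ 0) (hz' : z'.im ≠ 0)
    (h : 0 < (z' / z).im) :
    arg (z' / z) = arg z' - arg z + if 0 < z.im ∧ z'.im < 0 then 2 * π else 0 := by
  have hz0 : z ≠ 0 := fun h0 => hz (by simp [h0])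
  have hδ₀ : 0 < arg (z' / z) :=
    (arg_nonneg_iff.2 h.le).lt_of_ne' fun h0 => h.ne' (arg_eq_zero_iff.1 h0).2
  have hδπ : arg (z' / z) < π := arg_lt_pi_iff.2 (Or.inr h.ne')
  have hangle : ((arg z' - arg z - arg (z' / z) : ℝ) : Angle) = 0 := by
    have := arg_mul_coe_angle (y := z' / z) hz0 fun h0 => h.ne' (by simp [h0])
    rw [mul_div_cancel₀ _ hz0] at this
    rw [Angle.coe_sub, Angle.coe_sub, this]
    abel
  obtain ⟨k, hk⟩ := Angle.coe_eq_zero_iff.1 hangle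
  rw [zsmul_eq_mul] at hk
  have hlo := neg_pi_lt_arg z
  have hlo' := neg_pi_lt_arg z'
  have hhi : arg z < π := arg_lt_pi_iff.2 (Or.inr hz)
  have hhi' : arg z' < π := arg_lt_pi_iff.2 (Or.inr hz')
  have hk' : k = -1 ∨ k = 0 := by
    have h1 : -2 < k := by exact_mod_cast (by nlinarith [pi_pos] : (-2 : ℝ) < k)
    have h2 : k < 1 := by exact_mod_cast (by nlinarith [pi_pos] : (k : ℝ) < 1)
    omega
  split_ifs with hcross
  · have h1 : 0 < arg z :=
      (arg_nonneg_iff.2 hcross.1.le).lt_of_ne' fun h0 => hz (arg_eq_zero_iff.1 h0).2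
    have h2 : arg z' < 0 := arg_neg_iff.2 hcross.2
    rcases hk' with rfl | rfl <;> push_cast at hk <;> linarith
  · rcases hk' with rfl | rfl <;> push_cast at hk
    · exact absurd ⟨(arg_nonneg_iff.1 (by linarith)).lt_of_ne hz.symm,
        arg_neg_iff.1 (by linarith)⟩ hcross
    · linarith

theorem sum_range_arg_div_eq_two_pi_mul_card {v : ℕ → ℂ} {m : ℕ} (hv : ∀ i, (v i).im ≠ 0)
    (hturn : ∀ i, 0 < (v (i + 1) / v i).im) (hper : v m = v 0) :
    ∑ i ∈ range m, arg (v (i + 1) / v i)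
      = 2 * π * #{i ∈ range m | 0 < (v i).im ∧ (v (i + 1)).im < 0} := by
  rw [sum_congr rfl fun i _ => arg_div_eq_arg_sub_arg_add (hv i) (hv (i + 1)) (hturn i),
    sum_add_distrib, sum_range_sub (fun i => arg (v i)), hper, sub_self, zero_add,
    ← sum_filter, sum_const, nsmul_eq_mul]
  ring

end Complex

section Turning

variable {M : Type*} [AddCommGroup M] [Module ℝ M]

def IsTurning (a : ℕ → M) : Prop :=
  ∀ i, ∃ c₁ c₂ : ℝ, c₁ < 0 ∧ a (i + 2) = c₁ • a i + c₂ • a (i + 1)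

noncomputable def twoStepSeq (c₁ c₂ : ℕ → ℝ) : ℕ → ℂ
  | 0 => 1
  | 1 => Complex.I
  | i + 2 => c₁ i * twoStepSeq c₁ c₂ i + c₂ i * twoStepSeq c₁ c₂ (i + 1)

theorem IsTurning.exists_complex_coords {a : ℕ → M} (hturn : IsTurning a) :
    ∃ w : ℕ → ℂ, w 0 = 1 ∧ (∀ i, a i = (w i).re • a 0 + (w i).im • a 1) ∧
      ∀ i, 0 < (w (i + 1) / w i).im := by
  choose c₁ c₂ hc₁ hrec using hturn
  set w := twoStepSeq c₁ c₂
  have hw : ∀ i, w (i + 2) = c₁ i * w i + c₂ i * w (i + 1) := fun i => rfl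
  refine ⟨w, rfl, fun i => ?_, fun i => ?_⟩
  · suffices ∀ i, a i = (w i).re • a 0 + (w i).im • a 1 ∧
        a (i + 1) = (w (i + 1)).re • a 0 + (w (i + 1)).im • a 1 from (this i).1
    intro i
    induction i with
    | zero => exact ⟨by simp [w, twoStepSeq], by simp [w, twoStepSeq]⟩
    | succ i ih =>
      refine ⟨ih.2, ?_⟩
      rw [hrec, ih.1, ih.2, hw]
      simp only [Complex.add_re, Complex.add_im, Complex.re_ofReal_mul, Complex.im_ofReal_mul]
      module
  · induction i with
    | zero => simp [w, twoStepSeq]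
    | succ i ih =>
      have hw1 : w (i + 1) ≠ 0 := fun h => by simp [h] at ih
      -- with `r = w (i + 1) / w i`: `Im (c₁ r⁻¹ + c₂) = -c₁ Im r / |r|²` and `c₁ < 0`
      have : w (i + 2) / w (i + 1) = c₁ i * (w (i + 1) / w i)⁻¹ + c₂ i := by
        rw [hw, inv_div, add_div, mul_div_assoc, mul_div_assoc, div_self hw1, mul_one]
      rw [this, Complex.add_im, Complex.im_ofReal_mul, Complex.ofReal_im, add_zero,
        Complex.inv_im, neg_div, mul_neg, ← neg_mul]
      have : 0 < Complex.normSq (w (i + 1) / w i) :=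
        Complex.normSq_pos.2 fun h => by simp [h] at ih
      exact mul_pos (neg_pos.2 (hc₁ i)) (div_pos ih this)

noncomputable def upcrossingCount (ρ : M →ₗ[ℝ] ℝ) (a : ℕ → M) (m : ℕ) : ℕ :=
  #{i ∈ range m | ρ (a i) < 0 ∧ 0 < ρ (a (i + 1))}

theorem two_pi_mul_upcrossingCount {a : ℕ → M} {w : ℕ → ℂ} {m : ℕ}
    (hw : ∀ i, a i = (w i).re • a 0 + (w i).im • a 1) (hturn : ∀ i, 0 < (w (i + 1) / w i).im)
    (hper : w m = w 0) {ρ : M →ₗ[ℝ] ℝ} (hρ : ∀ i, ρ (a i) ≠ 0) :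
    2 * π * upcrossingCount ρ a m = ∑ i ∈ range m, Complex.arg (w (i + 1) / w i) := by
  set ζ : ℂ := -⟨ρ (a 1), ρ (a 0)⟩
  have him : ∀ i, (ζ * w i).im = -ρ (a i) := by
    intro i
    conv_rhs => rw [hw i]
    simp [ζ]
    ring
  have hζ : ζ ≠ 0 := fun h => hρ 0 (by simpa [h] using him 0)
  have hratio : ∀ i, ζ * w (i + 1) / (ζ * w i) = w (i + 1) / w i :=
    fun i => mul_div_mul_left _ _ hζ
  have := Complex.sum_range_arg_div_eq_two_pi_mul_card (v := fun i => ζ * w i) (m := m)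
    (fun i => by rw [him]; exact neg_ne_zero.2 (hρ i))
    (fun i => by simp only [hratio]; exact hturn i) (by simp only [hper])
  simp only [hratio, him, neg_pos, neg_lt_zero] at this
  rw [this, upcrossingCount]

theorem upcrossingCount_eq_of_isTurning {a : ℕ → M} {m : ℕ}
    (hli : LinearIndependent ℝ ![a 0, a 1]) (hturn : IsTurning a) (hper : a m = a 0)
    {ρ ρ' : M →ₗ[ℝ] ℝ} (hρ : ∀ i, ρ (a i) ≠ 0) (hρ' : ∀ i, ρ' (a i) ≠ 0) :
    upcrossingCount ρ a m = upcrossingCount ρ' a m := by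
  obtain ⟨w, hw0, hw, hwturn⟩ := hturn.exists_complex_coords
  have hwper : w m = w 0 := by
    have hcoord := LinearIndependent.pair_iff.1 hli ((w m).re - 1) (w m).im
      (by rw [sub_smul, one_smul, sub_add_eq_add_sub, ← hw, hper, sub_self])
    rw [hw0]
    exact Complex.ext (by simpa [sub_eq_zero] using hcoord.1) (by simpa using hcoord.2)
  have h := (two_pi_mul_upcrossingCount hw hwturn hwper hρ).trans
    (two_pi_mul_upcrossingCount hw hwturn hwper hρ').symm
  exact_mod_cast mul_left_cancel₀ (by positivity) h

end Turning

namespace SimpleGraph.Subgraph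

variable {G : SimpleGraph V}

theorem neighborSet_eq_pair {H : G.Subgraph} {p q r : V} (h2 : (H.neighborSet p).ncard = 2) (hq : H.Adj p q)
    (hr : H.Adj p r) (hqr : q ≠ r) : H.neighborSet p = {q, r} := by
  have hfin : (H.neighborSet p).Finite := Set.finite_of_ncard_ne_zero (by rw [h2]; norm_num)
  refine (Set.eq_of_subset_of_ncard_le ?_ ?_ hfin).symm
  · exact Set.insert_subset hq (Set.singleton_subset_iff.2 hr)
  · rw [h2, Set.ncard_pair hqr]

structure IsCyclicEnumeration (H : G.Subgraph) (m : ℕ) (x : ℕ → V) : Prop where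
  three_le : 3 ≤ m
  adj : ∀ i, H.Adj (x i) (x (i + 1))
  eq_iff_modEq : ∀ i j, x i = x j ↔ i ≡ j [MOD m]
  range_eq : Set.range x = H.verts

theorem Connected.exists_isCyclicEnumeration [Finite V] {H : G.Subgraph} (hH : H.Connected)
    (h2 : ∀ p ∈ H.verts, (H.neighborSet p).ncard = 2) :
    ∃ (m : ℕ) (x : ℕ → V), H.IsCyclicEnumeration m x := by
  have hcyc : H.spanningCoe.IsCycles := fun v ⟨w, hw⟩ => h2 v (H.edge_vert hw)
  obtain ⟨v₀, hv₀⟩ := hH.nonempty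
  obtain ⟨c, hc, hcverts⟩ := hcyc.exists_cycle_toSubgraph_verts_eq_connectedComponentSupp
    (c := H.spanningCoe.connectedComponentMk v₀) rfl
    (Set.nonempty_of_ncard_ne_zero (by rw [h2 v₀ hv₀]; norm_num) : (H.neighborSet v₀).Nonempty)
  set m := c.length
  have hm := hc.three_le_length
  set x : ℕ → V := fun i => c.getVert (i % m)
  have hx_of_le : ∀ j ≤ m, x j = c.getVert j := by
    intro j hj
    rcases hj.lt_or_eq with hj | rfl
    · simp [x, Nat.mod_eq_of_lt hj]
    · simp [x, m]
  have hadj : ∀ i, H.Adj (x i) (x (i + 1)) := by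
    intro i
    have hi : i % m < m := Nat.mod_lt _ (by omega)
    have : x (i + 1) = x (i % m + 1) :=
      congrArg c.getVert ((Nat.mod_modEq i m).symm.add_right 1)
    show H.Adj (c.getVert (i % m)) _
    rw [this, hx_of_le _ hi]
    exact c.adj_getVert_succ hi
  have hmod_le : ∀ i, i % m ≤ m - 1 := fun i => Nat.le_sub_one_of_lt (Nat.mod_lt _ (by omega))
  refine ⟨m, x, hm, hadj, fun i j => ⟨fun h => hc.getVert_injOn' (hmod_le i) (hmod_le j) h,
    congrArg c.getVert⟩, ?_⟩
  refine subset_antisymm (Set.range_subset_iff.2 fun i => (hadj i).fst_mem) fun p hp => ?_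
  have hreach : H.spanningCoe.Reachable v₀ p :=
    (hH ⟨v₀, hv₀⟩ ⟨p, hp⟩).map ⟨Subtype.val, fun h => h⟩
  have : p ∈ c.support := by
    rw [← Walk.mem_verts_toSubgraph, hcverts]
    exact ConnectedComponent.eq.2 hreach.symm
  obtain ⟨k, rfl, hk⟩ := Walk.mem_support_iff_exists_getVert.1 this
  exact ⟨k, hx_of_le k hk⟩

namespace IsCyclicEnumeration

variable {H : G.Subgraph} {m : ℕ} {x : ℕ → V} (hE : H.IsCyclicEnumeration m x)
include hE

theorem add_two_ne (i : ℕ) : x (i + 2) ≠ x i := fun h =>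
  have := Nat.le_of_dvd two_pos (Nat.add_modEq_left_iff.1 ((hE.eq_iff_modEq _ _).1 h))
  absurd hE.three_le (by omega)

theorem neighborSet_eq (h2 : ∀ p ∈ H.verts, (H.neighborSet p).ncard = 2) (i : ℕ) :
    H.neighborSet (x (i + 1)) = {x i, x (i + 2)} :=
  neighborSet_eq_pair (h2 _ (hE.adj i).snd_mem) (hE.adj i).symm (hE.adj (i + 1))
    (hE.add_two_ne i).symm

end IsCyclicEnumeration

end SimpleGraph.Subgraph

section Skeleton

variable {W : Type*} {G : SimpleGraph V} {θ : GraphConn G} {lam : CompatSys G}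
  {α : AxialFn G W} {H : G.Subgraph}

theorem axial_congr (α : AxialFn G W) {p q p' q' : V} (h : G.Adj p q) (h' : G.Adj p' q')
    (hp : p = p') (hq : q = q') : α h = α h' := by
  subst hp hq
  rfl

theorem SimpleGraph.Subgraph.IsCyclicEnumeration.axial_periodic {m : ℕ} {x : ℕ → V}
    (hE : H.IsCyclicEnumeration m x) :
    α (H.adj_sub (hE.adj m)) = α (H.adj_sub (hE.adj 0)) :=
  axial_congr α _ _ ((hE.eq_iff_modEq _ _).2 (by simp [Nat.ModEq]))
    ((hE.eq_iff_modEq _ _).2 Nat.add_modEq_left)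

variable [AddCommGroup W] [Module ℝ W]

namespace SimpleGraph.Subgraph.IsCyclicEnumeration

variable {m : ℕ} {x : ℕ → V} (hE : H.IsCyclicEnumeration m x)
include hE

theorem linearIndependent_axial (hskel : IsSkeletal G α) :
    LinearIndependent ℝ ![α (H.adj_sub (hE.adj 0)), α (H.adj_sub (hE.adj 1))] := by
  have hne : (⟨x 0, (H.adj_sub (hE.adj 0)).symm⟩ : G.neighborSet (x 1)) ≠
      ⟨x 2, H.adj_sub (hE.adj 1)⟩ := fun h => hE.add_two_ne 0 (congrArg Subtype.val h).symm
  have hli := hskel.2 (x 1) _ _ hne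
  have hflip : α (nadj (⟨x 0, (H.adj_sub (hE.adj 0)).symm⟩ : G.neighborSet (x 1))) =
      -α (H.adj_sub (hE.adj 0)) := hskel.1 _
  rw [hflip, LinearIndependent.pair_iff] at hli
  rw [LinearIndependent.pair_iff]
  intro s t hst
  simpa using hli (-s) t (by rw [neg_smul_neg]; exact hst)

theorem isTurning_axial (hθ : IsConnection G θ) (hlam : IsCompatSystem G θ lam)
    (hα : IsGenAxial G θ lam α) (hskel : IsSkeletal G α) (hH : IsSubskeleton θ H)
    (h2 : ∀ p ∈ H.verts, (H.neighborSet p).ncard = 2) :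
    IsTurning fun i => α (H.adj_sub (hE.adj i)) := by
  intro i
  set h' := H.adj_sub (hE.adj (i + 1))
  set e : G.neighborSet (x (i + 1)) := ⟨x i, (H.adj_sub (hE.adj i)).symm⟩
  obtain ⟨c, hc⟩ := hα.2 h' e (hE.add_two_ne i).symm
  -- `θ` carries `xᵢ₊₁xᵢ` to an edge of `H` at `xᵢ₊₂` (geodesic) other than the image
  -- `xᵢ₊₂xᵢ₊₁` of `xᵢ₊₁xᵢ₊₂`, so to `xᵢ₊₂xᵢ₊₃`.
  have hθe : (θ h' e : V) = x (i + 3) := by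
    have hmem : (θ h' e : V) ∈ H.neighborSet (x (i + 2)) :=
      hH.geodesic (hE.adj (i + 1)) e (hE.adj i).symm
    rw [hE.neighborSet_eq h2 (i + 1)] at hmem
    refine hmem.resolve_left fun hback => hE.add_two_ne i ?_
    exact (congrArg Subtype.val ((θ h').injective ((Subtype.ext hback).trans (hθ.1 h').symm))).symm
  have he : α (nadj e) = -α (H.adj_sub (hE.adj i)) := hskel.1 _
  rw [he, axial_congr α _ (H.adj_sub (hE.adj (i + 2))) rfl hθe] at hc
  have hl : 0 < lam h' e := hlam.1 h' e
  refine ⟨-(lam h' e)⁻¹, -(lam h' e)⁻¹ * c, neg_neg_of_pos (inv_pos.2 hl), ?_⟩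
  calc α (H.adj_sub (hE.adj (i + 2)))
      = (lam h' e)⁻¹ • (lam h' e • α (H.adj_sub (hE.adj (i + 2)))) :=
        (inv_smul_smul₀ hl.ne' _).symm
    _ = (lam h' e)⁻¹ • (-α (H.adj_sub (hE.adj i)) - c • α (H.adj_sub (hE.adj (i + 1)))) := by
        rw [← hc, sub_sub_cancel]
    _ = _ := by module

theorem subB0_eq_upcrossingCount [Finite V] (hskel : IsSkeletal G α)
    (h2 : ∀ p ∈ H.verts, (H.neighborSet p).ncard = 2) {ρ : W →ₗ[ℝ] ℝ}
    (hρ : ∀ i, ρ (α (H.adj_sub (hE.adj i))) ≠ 0) :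
    subB0 α ρ H = upcrossingCount ρ (fun i => α (H.adj_sub (hE.adj i))) m := by
  have hflip : ∀ i, α (H.adj_sub (hE.adj i).symm) = -α (H.adj_sub (hE.adj i)) :=
    fun i => hskel.1 _
  have hsource : ∀ i, subIndex α ρ H (x (i + 1)) = 0 ↔
      ρ (α (H.adj_sub (hE.adj i))) < 0 ∧ 0 < ρ (α (H.adj_sub (hE.adj (i + 1)))) := by
    intro i
    rw [subIndex, Set.ncard_eq_zero]
    simp only [Set.eq_empty_iff_forall_notMem, Set.mem_ofPred_eq, not_exists, not_lt]
    constructor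
    · intro h
      have h₀ := h (x i) (hE.adj i).symm
      rw [hflip, map_neg, neg_nonneg] at h₀
      exact ⟨h₀.lt_of_ne (hρ i), (h _ (hE.adj (i + 1))).lt_of_ne' (hρ (i + 1))⟩
    · rintro ⟨hneg, hpos⟩ q hq
      have hmem : q ∈ H.neighborSet (x (i + 1)) := hq
      rw [hE.neighborSet_eq h2] at hmem
      obtain rfl | rfl := hmem
      · rw [hflip, map_neg]
        linarith
      · exact hpos.le
  have hsources : {p | p ∈ H.verts ∧ subIndex α ρ H p = 0} = (fun i => x (i + 1)) ''
      ↑{i ∈ range m | ρ (α (H.adj_sub (hE.adj i))) < 0 ∧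
        0 < ρ (α (H.adj_sub (hE.adj (i + 1))))} := by
    ext p
    constructor
    · rintro ⟨hp, h0⟩
      obtain ⟨k, rfl⟩ := hE.range_eq.symm ▸ hp
      -- every vertex `x k` is `x (i + 1)` for the representative `i < m` of `k - 1`
      have hk : x ((k + m - 1) % m + 1) = x k := (hE.eq_iff_modEq _ _).2 <|
        ((Nat.mod_modEq _ m).add_right 1).trans (by
          rw [show k + m - 1 + 1 = k + m by have := hE.three_le; omega]
          exact Nat.add_modEq_right)
      refine ⟨(k + m - 1) % m, ?_, hk⟩
      rw [coe_filter, Set.mem_ofPred_eq, mem_range, ← hsource, hk]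
      exact ⟨Nat.mod_lt _ (by have := hE.three_le; omega), h0⟩
    · rintro ⟨i, hi, rfl⟩
      rw [coe_filter, Set.mem_ofPred_eq, ← hsource] at hi
      exact ⟨(hE.adj i).snd_mem, hi.2⟩
  have hinj : Set.InjOn (fun i => x (i + 1)) (Set.Iio m) := fun i hi j hj hij =>
    (((hE.eq_iff_modEq _ _).1 hij).add_right_cancel' 1).eq_of_lt_of_lt hi hj
  rw [subB0, hsources, (hinj.mono fun i hi => by
    rw [coe_filter] at hi; exact mem_range.1 hi.1).ncard_image, Set.ncard_coe_finset,
    upcrossingCount]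

end SimpleGraph.Subgraph.IsCyclicEnumeration

theorem subB0_eq_of_twoValent_subskeleton [Finite V] (hθ : IsConnection G θ)
    (hlam : IsCompatSystem G θ lam) (hα : IsGenAxial G θ lam α) (hskel : IsSkeletal G α)
    (hH : IsSubskeleton θ H) (h2 : ∀ p ∈ H.verts, (H.neighborSet p).ncard = 2)
    {ρ ρ' : W →ₗ[ℝ] ℝ} (hρ : GenericCovec G α ρ) (hρ' : GenericCovec G α ρ') :
    subB0 α ρ H = subB0 α ρ' H := by
  obtain ⟨m, x, hE⟩ := hH.connected.exists_isCyclicEnumeration h2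
  rw [hE.subB0_eq_upcrossingCount hskel h2 fun i => hρ _,
    hE.subB0_eq_upcrossingCount hskel h2 fun i => hρ' _]
  exact upcrossingCount_eq_of_isTurning (a := fun i => α (H.adj_sub (hE.adj i)))
    (hE.linearIndependent_axial hskel)
    (hE.isTurning_axial hθ hlam hα hskel hH h2) hE.axial_periodic (fun i => hρ _) fun i => hρ' _

theorem isTwoFace_iff_of_genericCovec [Finite V] (hθ : IsConnection G θ)
    (hlam : IsCompatSystem G θ lam) (hα : IsGenAxial G θ lam α) (hskel : IsSkeletal G α)
    {ρ ρ' : W →ₗ[ℝ] ℝ} (hρ : GenericCovec G α ρ) (hρ' : GenericCovec G α ρ') :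
    IsTwoFace θ α ρ H ↔ IsTwoFace θ α ρ' H :=
  and_congr_right fun hH => and_congr_right fun h2 => by
    rw [subB0_eq_of_twoValent_subskeleton hθ hlam hα hskel hH h2 hρ hρ']

theorem enoughTwoFaces_iff_of_genericCovec [Finite V] (hθ : IsConnection G θ)
    (hlam : IsCompatSystem G θ lam) (hα : IsGenAxial G θ lam α) (hskel : IsSkeletal G α)
    {ρ ρ' : W →ₗ[ℝ] ℝ} (hρ : GenericCovec G α ρ) (hρ' : GenericCovec G α ρ') :
    EnoughTwoFaces G θ α ρ ↔ EnoughTwoFaces G θ α ρ' := by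
  simp only [EnoughTwoFaces, isTwoFace_iff_of_genericCovec hθ hlam hα hskel hρ hρ']

section Pairing

variable {W' : Type*} [AddCommGroup W'] [Module ℝ W'] {A : AxialFn G W'}
  {ρ : W →ₗ[ℝ] ℝ} {ρ' : W' →ₗ[ℝ] ℝ} (hpair : ∀ ⦃p q : V⦄ (h : G.Adj p q), ρ' (A h) = ρ (α h))
include hpair

theorem genericCovec_iff_of_pairing : GenericCovec G A ρ' ↔ GenericCovec G α ρ := by
  simp only [GenericCovec, hpair]

theorem polarizingCovec_iff_of_pairing : PolarizingCovec G A ρ' ↔ PolarizingCovec G α ρ := by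
  have hdir : dirRel G A ρ' = dirRel G α ρ := by
    ext p q
    simp only [dirRel, hpair]
  rw [PolarizingCovec, PolarizingCovec, genericCovec_iff_of_pairing hpair, hdir]

theorem isTwoFace_iff_of_pairing : IsTwoFace θ A ρ' H ↔ IsTwoFace θ α ρ H := by
  simp only [IsTwoFace, subB0, subIndex, hpair]

theorem enoughTwoFaces_iff_of_pairing :
    EnoughTwoFaces G θ A ρ' ↔ EnoughTwoFaces G θ α ρ := by
  simp only [EnoughTwoFaces, isTwoFace_iff_of_pairing hpair]

end Pairing

end Skeleton

theorem lift_of_reducible_is_reducible_general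
    {V : Type u} [Fintype V] {n N : ℕ}
    (G : SimpleGraph V) (θ : GraphConn G) (lam : CompatSys G)
    (α : AxialFn G (Fin n → ℝ))
    (hsk : IsOneSkeleton G θ lam α)
    (hred : ReducibleSkel G θ α)
    (A : AxialFn G (Fin N → ℝ))
    (L : (Fin N → ℝ) →ₗ[ℝ] (Fin n → ℝ))
    (hαA : ∀ ⦃p q : V⦄ (h : G.Adj p q), α h = L (A h)) :
    ∀ ξ : (Fin n → ℝ) →ₗ[ℝ] ℝ, PolarizingCovec G α ξ →
      GenericCovec G A (ξ.comp L) ∧ PolarizingCovec G A (ξ.comp L) ∧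
      (∀ H : G.Subgraph, IsTwoFace θ A (ξ.comp L) H ↔ IsTwoFace θ α ξ H) ∧
      EnoughTwoFaces G θ A (ξ.comp L) := by
  intro ξ hξ
  obtain ⟨ξ₀, hξ₀, henough⟩ := hred
  have hpair : ∀ ⦃p q : V⦄ (h : G.Adj p q), ξ.comp L (A h) = ξ (α h) := fun _ _ h => by
    rw [hαA h, LinearMap.comp_apply]
  have hpol : PolarizingCovec G A (ξ.comp L) := (polarizingCovec_iff_of_pairing hpair).2 hξ
  refine ⟨hpol.1, hpol, fun H => isTwoFace_iff_of_pairing hpair, ?_⟩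
  rwa [enoughTwoFaces_iff_of_pairing hpair, enoughTwoFaces_iff_of_genericCovec hsk.1.conn
    hsk.1.compat hsk.1.axial hsk.2 hξ.1 hξ₀.1]

/-- A lift of a reducible 1-skeleton is reducible, with the same 2-faces. -/
theorem lift_of_reducible_is_reducible
    {V : Type u} [Fintype V] {n N d : ℕ}
    (G : SimpleGraph V) (θ : GraphConn G) (lam : CompatSys G)
    (α : AxialFn G (Fin n → ℝ))
    (hsk : IsOneSkeleton G θ lam α) (hd : Valency G d)
    (hred : ReducibleSkel G θ α)
    (A : AxialFn G (Fin N → ℝ)) (hA : IsGenAxial G θ lam A) (hAeff : EffectiveAxial G A)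
    (hnN : n < N) (hNd : N ≤ d)
    (L : (Fin N → ℝ) →ₗ[ℝ] (Fin n → ℝ)) (hL : Function.Surjective L)
    (hαA : ∀ ⦃p q : V⦄ (h : G.Adj p q), α h = L (A h)) :
    ∀ ξ : (Fin n → ℝ) →ₗ[ℝ] ℝ, PolarizingCovec G α ξ →
      GenericCovec G A (ξ.comp L) ∧ PolarizingCovec G A (ξ.comp L) ∧
      (∀ H : G.Subgraph, IsTwoFace θ A (ξ.comp L) H ↔ IsTwoFace θ α ξ H) ∧
      EnoughTwoFaces G θ A (ξ.comp L) :=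
  lift_of_reducible_is_reducible_general G θ lam α hsk hred A L hαA
end
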